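/- arXiv:2411.00806 — 2 statements merged into one kernel-verified Lean document; each statement's English description precedes it below -/
import Mathlib

section
/- Let v ∈ V, let B = {x : |x − b|_p ≤ p^{−d}} ⊆ U_v be a ball contained in U_v (so d ≥ r_v), let j ∈ {1,…,p−1}, and let ψ = ψ_{B,j} be the Kozyrev wavelet. Then for every x ∈ Z, H ψ(x) = λ_B · ψ(x), where λ_B = −p^{d(α−1)} − ∫_{U_v∖B} |y − b|_p^{−α} dμ(y) − ∑_{w ∈ V, w ≠ v} K(v,w)·μ(U_w). In particular every Kozyrev wavelet supported in one of the vertex balls is an eigenfunction of the p-adic graph Laplacian H. (Kozyrev-wavelet part of the spectral theorem for H_• on L²(Z, dx).) -/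
open MeasureTheory

/-- The vertex whose ball contains `x` (junk value if there is none). -/
noncomputable def vertexOf {p : ℕ} [Fact p.Prime] {V : Type*} [Nonempty V]
    (U : V → Set ℚ_[p]) (x : ℚ_[p]) : V :=
  haveI := Classical.propDecidable (∃ v, x ∈ U v)
  if h : ∃ v, x ∈ U v then h.choose else Classical.arbitrary V

/-- The kernel `k_p(x,y) = |x − y|_p^{−α}` if `x, y` lie in the same vertex ball,
and `k_p(x,y) = K(v(x), v(y))` otherwise. -/
noncomputable def graphKernel {p : ℕ} [Fact p.Prime] {V : Type*} [Nonempty V]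
    [DecidableEq V] (U : V → Set ℚ_[p]) (α : ℝ) (K : V → V → ℝ)
    (x y : ℚ_[p]) : ℝ :=
  if vertexOf U x = vertexOf U y then ‖x - y‖ ^ (-α)
  else K (vertexOf U x) (vertexOf U y)

/-- The p-adic graph Laplacian `H u (x) = ∫_Z k_p(x,y)(u(y) − u(x)) dμ(y)` on
`Z = ⋃_v U_v`. -/
noncomputable def graphLaplacian {p : ℕ} [Fact p.Prime] {V : Type*} [Nonempty V]
    [DecidableEq V] [MeasurableSpace ℚ_[p]] (μ : Measure ℚ_[p])
    (U : V → Set ℚ_[p]) (α : ℝ) (K : V → V → ℝ) (u : ℚ_[p] → ℂ) (x : ℚ_[p]) : ℂ :=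
  ∫ y in ⋃ v, U v, graphKernel U α K x y • (u y - u x) ∂μ

/-- The **Kozyrev wavelet** `ψ_{B,j}` attached to the ball
`B = {x : |x − b|_p ≤ p^{−d}}`, a primitive `p`-th root of unity `ζ` and `j`. -/
noncomputable def kozyrevWavelet (p : ℕ) [hp : Fact p.Prime] (b : ℚ_[p]) (d : ℤ)
    (ζ : ℂ) (j : ℕ) (x : ℚ_[p]) : ℂ :=
  if h : ‖x - b‖ ≤ (p : ℝ) ^ (-d) then
    ζ ^ (j * (PadicInt.toZMod (⟨(x - b) / (p : ℚ_[p]) ^ d, by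
      have hp1 : (1 : ℝ) < p := by exact_mod_cast hp.out.one_lt
      have hpos : (0 : ℝ) < (p : ℝ) ^ (-d) := zpow_pos (by linarith) _
      show ‖(x - b) / (p : ℚ_[p]) ^ d‖ ≤ 1
      rw [norm_div, norm_zpow, Padic.norm_p, inv_zpow, ← zpow_neg,
        div_le_one hpos]
      exact h⟩ : ℤ_[p])).val)
  else 0


/-!
Write `B` for the ball `‖x - b‖ ≤ p ^ (-d)` and `ψ` for the wavelet. Translation by `p ^ d` adds
one to the `d`-th digit of `x - b`, so `ψ (x + p ^ d) = ζ ^ j * ψ x`, and translation invariance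
of `μ` together with `ζ ^ j ≠ 1` gives `∫ ψ = 0`.

If `x ∉ B`, the ultrametric inequality makes `k_p(x, ·)` constant on `B`, so `H ψ (x)` is a
multiple of `∫ ψ = 0`. If `x ∈ B`, split `Z` into `B`, `U_v \ B` and the balls `U_w`, `w ≠ v`.
On `B` the difference `ψ y - ψ x` vanishes unless `‖x - y‖ = p ^ (-d)`, so the kernel can be
replaced by the constant `p ^ (d α)` and the integral is `p ^ (d α) (∫ ψ - μ B * ψ x)`, with
`μ B = p ^ (-d)`. On `U_v \ B` one has `ψ y = 0` and `‖x - y‖ = ‖y - b‖`; on `U_w` the kernel is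
the constant `K v w`. The volume of balls follows from `μ ℤ_[p] = 1`, because the digit in position
`m` splits a ball of radius `p ^ (-m)` into `p` translates of the ball of radius `p ^ (-(m + 1))`.
-/

open Metric

lemma setOf_norm_sub_le_eq_closedBall {E : Type*} [SeminormedAddCommGroup E] (c : E) (r : ℝ) :
    {x : E | ‖x - c‖ ≤ r} = closedBall c r := by
  ext x
  rw [mem_closedBall, dist_eq_norm]
  rfl

lemma IsUltrametricDist.dist_eq_of_mem_closedBall_of_notMem {X : Type*} [PseudoMetricSpace X]
    [IsUltrametricDist X] {b x y : X} {r : ℝ} (hx : x ∈ closedBall b r)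
    (hy : y ∉ closedBall b r) : dist y x = dist y b := by
  rw [mem_closedBall, dist_comm] at hx
  rw [mem_closedBall, not_le] at hy
  rw [dist_eq_max_of_dist_ne_dist y b x (hx.trans_lt hy).ne', max_eq_left (hx.trans hy.le)]

lemma IsUltrametricDist.integrableOn_norm_sub_rpow_diff_closedBall {E : Type*}
    [NormedAddCommGroup E] [IsUltrametricDist E] [MeasurableSpace E] [OpensMeasurableSpace E]
    (μ : Measure E) [IsFiniteMeasureOnCompacts μ] {s : Set E} (hs : IsCompact s) {b : E} {r : ℝ}
    (hr : 0 < r) (α : ℝ) : IntegrableOn (fun y => ‖y - b‖ ^ (-α)) (s \ closedBall b r) μ := by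
  refine ContinuousOn.integrableOn_compact (hs.diff (isOpen_closedBall b hr.ne')) fun y hy => ?_
  have hyb : ‖y - b‖ ≠ 0 := by
    rw [← dist_eq_norm]
    exact (hr.trans (not_le.1 hy.2)).ne'
  exact ((continuous_norm.comp (continuous_sub_right b)).continuousAt.rpow_const
    (Or.inl hyb)).continuousWithinAt

lemma PadicInt.toZMod_eq_toZMod_iff {p : ℕ} [Fact p.Prime] (u w : ℤ_[p]) :
    PadicInt.toZMod u = PadicInt.toZMod w ↔ ‖u - w‖ < 1 := by
  rw [← sub_eq_zero, ← map_sub, ← RingHom.mem_ker, PadicInt.ker_toZMod,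
    IsLocalRing.mem_maximalIdeal, PadicInt.mem_nonunits]

namespace Padic

variable {p : ℕ} [hp : Fact p.Prime]

section Digits

lemma zpow_natCast_pos (m : ℤ) : 0 < (p : ℝ) ^ m :=
  zpow_pos (Nat.cast_pos.2 hp.out.pos) m

lemma norm_div_zpow_le_one {m : ℤ} {z : ℚ_[p]} (hz : ‖z‖ ≤ (p : ℝ) ^ (-m)) :
    ‖z / (p : ℚ_[p]) ^ m‖ ≤ 1 := by
  rwa [norm_div, norm_p_zpow, div_le_one (zpow_natCast_pos _)]

/-- `z / p ^ m mod p`, the digit of `z` in position `m`; junk value `0` unless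
`‖z‖ ≤ p ^ (-m)`. -/
noncomputable def digit (m : ℤ) (z : ℚ_[p]) : ZMod p :=
  if h : ‖z‖ ≤ (p : ℝ) ^ (-m) then
    PadicInt.toZMod (⟨z / (p : ℚ_[p]) ^ m, norm_div_zpow_le_one h⟩ : ℤ_[p])
  else 0

lemma digit_of_norm_le {m : ℤ} {z : ℚ_[p]} (hz : ‖z‖ ≤ (p : ℝ) ^ (-m)) :
    digit m z = PadicInt.toZMod (⟨z / (p : ℚ_[p]) ^ m, norm_div_zpow_le_one hz⟩ : ℤ_[p]) :=
  dif_pos hz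

lemma digit_eq_digit_iff {m : ℤ} {z w : ℚ_[p]} (hz : ‖z‖ ≤ (p : ℝ) ^ (-m))
    (hw : ‖w‖ ≤ (p : ℝ) ^ (-m)) : digit m z = digit m w ↔ ‖z - w‖ < (p : ℝ) ^ (-m) := by
  rw [digit_of_norm_le hz, digit_of_norm_le hw]
  refine (PadicInt.toZMod_eq_toZMod_iff _ _).trans ?_
  change ‖z / (p : ℚ_[p]) ^ m - w / (p : ℚ_[p]) ^ m‖ < 1 ↔ _
  rw [← sub_div, norm_div, norm_p_zpow, div_lt_one (zpow_natCast_pos _)]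

lemma digit_add {m : ℤ} {z w : ℚ_[p]} (hz : ‖z‖ ≤ (p : ℝ) ^ (-m))
    (hw : ‖w‖ ≤ (p : ℝ) ^ (-m)) : digit m (z + w) = digit m z + digit m w := by
  have hzw : ‖z + w‖ ≤ (p : ℝ) ^ (-m) :=
    (IsUltrametricDist.norm_add_le_max z w).trans (max_le hz hw)
  rw [digit_of_norm_le hz, digit_of_norm_le hw, digit_of_norm_le hzw]
  exact (congrArg PadicInt.toZMod (Subtype.ext (add_div z w _))).trans (map_add _ _ _)

lemma norm_natCast_mul_zpow_le (k : ℕ) (m : ℤ) :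
    ‖(k : ℚ_[p]) * (p : ℚ_[p]) ^ m‖ ≤ (p : ℝ) ^ (-m) := by
  rw [norm_mul, norm_p_zpow]
  exact mul_le_of_le_one_left (zpow_natCast_pos _).le (by exact_mod_cast norm_int_le_one (p := p) k)

lemma digit_natCast_mul_zpow (k : ℕ) (m : ℤ) :
    digit m ((k : ℚ_[p]) * (p : ℚ_[p]) ^ m) = k := by
  rw [digit_of_norm_le (norm_natCast_mul_zpow_le k m), ← map_natCast PadicInt.toZMod k]
  congr 1
  exact Subtype.ext (by simp [zpow_ne_zero, hp.out.ne_zero])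

lemma digit_zpow (m : ℤ) : digit m ((p : ℚ_[p]) ^ m) = 1 := by
  simpa using digit_natCast_mul_zpow (p := p) 1 m

lemma mem_ball_iff_digit_eq {m : ℤ} (k : ZMod p) (z : ℚ_[p]) :
    z ∈ ball ((k.val : ℚ_[p]) * (p : ℚ_[p]) ^ m) ((p : ℝ) ^ (-m)) ↔
      ‖z‖ ≤ (p : ℝ) ^ (-m) ∧ digit m z = k := by
  have hc := norm_natCast_mul_zpow_le (p := p) k.val m
  have hk : digit m ((k.val : ℚ_[p]) * (p : ℚ_[p]) ^ m) = k := by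
    rw [digit_natCast_mul_zpow, ZMod.natCast_zmod_val]
  rw [mem_ball, dist_eq_norm]
  constructor
  · intro h
    have hz : ‖z‖ ≤ (p : ℝ) ^ (-m) := by
      simpa using (IsUltrametricDist.norm_add_le_max (z - _) _).trans (max_le h.le hc)
    exact ⟨hz, ((digit_eq_digit_iff hz hc).2 h).trans hk⟩
  · rintro ⟨hz, h⟩
    exact (digit_eq_digit_iff hz hc).1 (h.trans hk.symm)

end Digits

section HaarMeasure

lemma ball_zpow_eq_closedBall (c : ℚ_[p]) (m : ℤ) :
    ball c ((p : ℝ) ^ (-m)) = closedBall c ((p : ℝ) ^ (-(m + 1))) := by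
  ext z
  rw [mem_ball, mem_closedBall, dist_eq_norm, norm_le_pow_iff_norm_lt_pow_add_one]
  ring_nf

lemma closedBall_zero_eq_iUnion_ball (m : ℤ) :
    closedBall (0 : ℚ_[p]) ((p : ℝ) ^ (-m)) =
      ⋃ k : ZMod p, ball ((k.val : ℚ_[p]) * (p : ℚ_[p]) ^ m) ((p : ℝ) ^ (-m)) := by
  ext z
  simp only [mem_closedBall_zero_iff, Set.mem_iUnion, mem_ball_iff_digit_eq]
  exact ⟨fun hz => ⟨digit m z, hz, rfl⟩, fun ⟨_, hz, _⟩ => hz⟩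

lemma pairwise_disjoint_ball_digit (m : ℤ) :
    Pairwise (Function.onFun Disjoint
      fun k : ZMod p => ball ((k.val : ℚ_[p]) * (p : ℚ_[p]) ^ m) ((p : ℝ) ^ (-m))) := by
  intro k l hkl
  refine Set.disjoint_left.2 fun z hk hl => hkl ?_
  rw [mem_ball_iff_digit_eq] at hk hl
  exact hk.2.symm.trans hl.2

variable [MeasurableSpace ℚ_[p]] [BorelSpace ℚ_[p]] (μ : Measure ℚ_[p]) [μ.IsAddHaarMeasure]

lemma addHaar_closedBall_zpow_eq_mul (m : ℤ) :
    μ (closedBall 0 ((p : ℝ) ^ (-m))) = p * μ (closedBall 0 ((p : ℝ) ^ (-(m + 1)))) := by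
  rw [closedBall_zero_eq_iUnion_ball, measure_iUnion (pairwise_disjoint_ball_digit m)
    fun _ => measurableSet_ball, tsum_fintype]
  simp_rw [Measure.addHaar_ball_center, ball_zpow_eq_closedBall]
  rw [Finset.sum_const, Finset.card_univ, ZMod.card, nsmul_eq_mul]

theorem measureReal_closedBall_zpow (hμ : μ (closedBall 0 1) = 1) (c : ℚ_[p]) (m : ℤ) :
    μ.real (closedBall c ((p : ℝ) ^ (-m))) = (p : ℝ) ^ (-m) := by
  have hp0 : (p : ℝ) ≠ 0 := Nat.cast_ne_zero.2 hp.out.ne_zero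
  have hrec (m : ℤ) : μ.real (closedBall 0 ((p : ℝ) ^ (-m))) =
      p * μ.real (closedBall 0 ((p : ℝ) ^ (-(m + 1)))) := by
    rw [measureReal_def, addHaar_closedBall_zpow_eq_mul, ENNReal.toReal_mul,
      ENNReal.toReal_natCast, measureReal_def]
  rw [measureReal_def, Measure.addHaar_closedBall_center, ← measureReal_def]
  induction m using Int.induction_on with
  | zero => simp [measureReal_def, hμ]
  | succ k ih =>
    rw [hrec, neg_add, zpow_add₀ hp0, zpow_neg_one] at ih
    rw [neg_add, zpow_add₀ hp0, zpow_neg_one]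
    field_simp at ih ⊢
    linarith
  | pred k ih =>
    rw [hrec, show -(k : ℤ) - 1 + 1 = -k by ring, ih, ← zpow_one_add₀ hp0]
    ring_nf

end HaarMeasure

section KozyrevWavelet

variable {b : ℚ_[p]} {d : ℤ} {ζ : ℂ} {j : ℕ}

lemma kozyrevWavelet_of_mem {x : ℚ_[p]} (hx : x ∈ closedBall b ((p : ℝ) ^ (-d))) :
    kozyrevWavelet p b d ζ j x = ζ ^ (j * (digit d (x - b)).val) := by
  rw [mem_closedBall, dist_eq_norm] at hx
  rw [kozyrevWavelet, dif_pos hx, digit_of_norm_le hx]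

lemma kozyrevWavelet_of_notMem {x : ℚ_[p]} (hx : x ∉ closedBall b ((p : ℝ) ^ (-d))) :
    kozyrevWavelet p b d ζ j x = 0 := by
  rw [mem_closedBall, dist_eq_norm] at hx
  rw [kozyrevWavelet, dif_neg hx]

lemma kozyrevWavelet_eq_of_dist_lt {x y : ℚ_[p]} (hx : x ∈ closedBall b ((p : ℝ) ^ (-d)))
    (hxy : dist y x < (p : ℝ) ^ (-d)) :
    kozyrevWavelet p b d ζ j y = kozyrevWavelet p b d ζ j x := by
  have hy : y ∈ closedBall b ((p : ℝ) ^ (-d)) := by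
    rw [IsUltrametricDist.closedBall_eq_of_mem hx]
    exact hxy.le
  rw [kozyrevWavelet_of_mem hx, kozyrevWavelet_of_mem hy]
  rw [mem_closedBall, dist_eq_norm] at hx hy
  rw [(digit_eq_digit_iff hy hx).2 (by rwa [sub_sub_sub_cancel_right, ← dist_eq_norm])]

lemma continuous_kozyrevWavelet : Continuous (kozyrevWavelet p b d ζ j) := by
  refine continuous_iff_continuousAt.2 fun x => ?_
  by_cases hx : x ∈ closedBall b ((p : ℝ) ^ (-d))
  · refine (continuousAt_const (y := kozyrevWavelet p b d ζ j x)).congr ?_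
    filter_upwards [ball_mem_nhds x (zpow_natCast_pos (p := p) (-d))] with y hy
    exact (kozyrevWavelet_eq_of_dist_lt hx hy).symm
  · refine (continuousAt_const (y := (0 : ℂ))).congr ?_
    filter_upwards [isClosed_closedBall.isOpen_compl.mem_nhds hx] with y hy
    rw [kozyrevWavelet_of_notMem hy]

lemma kozyrevWavelet_add_zpow (hζ : ζ ^ p = 1) (x : ℚ_[p]) :
    kozyrevWavelet p b d ζ j (x + (p : ℚ_[p]) ^ d) = ζ ^ j * kozyrevWavelet p b d ζ j x := by
  have hshift : ‖(p : ℚ_[p]) ^ d‖ ≤ (p : ℝ) ^ (-d) := (norm_p_zpow d).le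
  have hmem : x + (p : ℚ_[p]) ^ d ∈ closedBall b ((p : ℝ) ^ (-d)) ↔
      x ∈ closedBall b ((p : ℝ) ^ (-d)) := by
    have hxx : dist (x + (p : ℚ_[p]) ^ d) x ≤ (p : ℝ) ^ (-d) := by
      rwa [dist_eq_norm, add_sub_cancel_left]
    constructor <;> intro h <;> rw [IsUltrametricDist.closedBall_eq_of_mem h]
    exacts [mem_closedBall_comm.1 hxx, hxx]
  by_cases hx : x ∈ closedBall b ((p : ℝ) ^ (-d))
  · have hxb : ‖x - b‖ ≤ (p : ℝ) ^ (-d) := by rwa [mem_closedBall, dist_eq_norm] at hx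
    have : NeZero p := ⟨hp.out.ne_zero⟩
    have hζj : (ζ ^ j) ^ p = 1 := by rw [← pow_mul, mul_comm, pow_mul, hζ, one_pow]
    rw [kozyrevWavelet_of_mem (hmem.2 hx), kozyrevWavelet_of_mem hx, add_sub_right_comm,
      digit_add hxb hshift, digit_zpow, pow_mul, pow_mul, ← AddChar.zmodChar_apply hζj,
      ← AddChar.zmodChar_apply hζj, AddChar.map_add_eq_mul, AddChar.zmodChar_apply,
      AddChar.zmodChar_apply, ZMod.val_one, pow_one, mul_comm]
  · rw [kozyrevWavelet_of_notMem hx, kozyrevWavelet_of_notMem (hmem.not.2 hx), mul_zero]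

theorem integral_kozyrevWavelet [MeasurableSpace ℚ_[p]] [MeasurableAdd ℚ_[p]]
    (μ : Measure ℚ_[p]) [μ.IsAddRightInvariant] (hζ : ζ ^ p = 1) (hζj : ζ ^ j ≠ 1) :
    ∫ x, kozyrevWavelet p b d ζ j x ∂μ = 0 := by
  have h := integral_add_right_eq_self (μ := μ) (kozyrevWavelet p b d ζ j) ((p : ℚ_[p]) ^ d)
  simp_rw [kozyrevWavelet_add_zpow hζ, integral_const_mul] at h
  have h' : (ζ ^ j - 1) * ∫ x, kozyrevWavelet p b d ζ j x ∂μ = 0 := by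
    rw [sub_mul, h, one_mul, sub_self]
  exact (mul_eq_zero.1 h').resolve_left (sub_ne_zero.2 hζj)

lemma kozyrevWavelet_eq_zero_of_mem_of_ne {V : Type*} {U : V → Set ℚ_[p]} {v : V}
    (hdisj : Pairwise (Function.onFun Disjoint U))
    (hB : closedBall b ((p : ℝ) ^ (-d)) ⊆ U v) {w : V} (hvw : v ≠ w) {y : ℚ_[p]} (hy : y ∈ U w) :
    kozyrevWavelet p b d ζ j y = 0 :=
  kozyrevWavelet_of_notMem fun hyB => Set.disjoint_left.1 (hdisj hvw) (hB hyB) hy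

end KozyrevWavelet

section LocalEigenvalue

variable {b : ℚ_[p]} {d : ℤ} {ζ : ℂ} {j : ℕ} {x : ℚ_[p]}

lemma eqOn_norm_sub_rpow_smul_kozyrevWavelet_sub (hx : x ∈ closedBall b ((p : ℝ) ^ (-d)))
    (α : ℝ) :
    Set.EqOn (fun y => ‖x - y‖ ^ (-α) • (kozyrevWavelet p b d ζ j y - kozyrevWavelet p b d ζ j x))
      (fun y => ((p : ℝ) ^ (-d)) ^ (-α) •
        (kozyrevWavelet p b d ζ j y - kozyrevWavelet p b d ζ j x))
      (closedBall b ((p : ℝ) ^ (-d))) := by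
  intro y hy
  rw [IsUltrametricDist.closedBall_eq_of_mem hx, mem_closedBall] at hy
  rcases hy.lt_or_eq with h | h
  · simp only [kozyrevWavelet_eq_of_dist_lt hx h, sub_self, smul_zero]
  · rw [← h, dist_comm, dist_eq_norm]

variable [MeasurableSpace ℚ_[p]] [BorelSpace ℚ_[p]] (μ : Measure ℚ_[p]) [μ.IsAddHaarMeasure]

lemma integrableOn_closedBall_norm_sub_rpow_smul (hx : x ∈ closedBall b ((p : ℝ) ^ (-d)))
    (α : ℝ) :
    IntegrableOn
      (fun y => ‖x - y‖ ^ (-α) • (kozyrevWavelet p b d ζ j y - kozyrevWavelet p b d ζ j x))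
      (closedBall b ((p : ℝ) ^ (-d))) μ := by
  refine IntegrableOn.congr_fun ?_ (eqOn_norm_sub_rpow_smul_kozyrevWavelet_sub hx α).symm
    measurableSet_closedBall
  have hψ : Continuous (kozyrevWavelet p b d ζ j) := continuous_kozyrevWavelet
  exact (by fun_prop : Continuous _).continuousOn.integrableOn_compact (isCompact_closedBall _ _)

theorem setIntegral_closedBall_norm_sub_rpow_smul (hμ : μ (closedBall 0 1) = 1)
    (hζ : ζ ^ p = 1) (hζj : ζ ^ j ≠ 1) (hx : x ∈ closedBall b ((p : ℝ) ^ (-d))) (α : ℝ) :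
    ∫ y in closedBall b ((p : ℝ) ^ (-d)),
        ‖x - y‖ ^ (-α) • (kozyrevWavelet p b d ζ j y - kozyrevWavelet p b d ζ j x) ∂μ =
      (-(p : ℝ) ^ ((d : ℝ) * (α - 1))) • kozyrevWavelet p b d ζ j x := by
  have hp0 : (0 : ℝ) < p := Nat.cast_pos.2 hp.out.pos
  have hexp : ((p : ℝ) ^ (-d)) ^ (-α) * (p : ℝ) ^ (-d) = (p : ℝ) ^ ((d : ℝ) * (α - 1)) := by
    rw [← Real.rpow_intCast, ← Real.rpow_mul hp0.le, ← Real.rpow_add hp0]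
    push_cast
    ring_nf
  have hψ : IntegrableOn (kozyrevWavelet p b d ζ j) (closedBall b ((p : ℝ) ^ (-d))) μ :=
    continuous_kozyrevWavelet.continuousOn.integrableOn_compact (isCompact_closedBall _ _)
  rw [setIntegral_congr_fun measurableSet_closedBall
      (eqOn_norm_sub_rpow_smul_kozyrevWavelet_sub hx α), integral_smul,
    integral_sub hψ (integrableOn_const measure_closedBall_lt_top.ne),
    setIntegral_eq_integral_of_forall_compl_eq_zero fun y hy => kozyrevWavelet_of_notMem hy,
    integral_kozyrevWavelet μ hζ hζj, setIntegral_const, measureReal_closedBall_zpow μ hμ,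
    zero_sub, smul_neg, smul_smul, hexp, neg_smul]

end LocalEigenvalue

section GraphLaplacian

variable {V : Type*} [Nonempty V] {U : V → Set ℚ_[p]}

lemma vertexOf_eq (hdisj : Pairwise (Function.onFun Disjoint U)) {x : ℚ_[p]} {w : V}
    (hx : x ∈ U w) : vertexOf U x = w := by
  have hex : ∃ v, x ∈ U v := ⟨w, hx⟩
  rw [vertexOf, dif_pos hex]
  by_contra hne
  exact Set.disjoint_left.1 (hdisj hne) hex.choose_spec hx

variable [DecidableEq V] {α : ℝ} {K : V → V → ℝ}

lemma graphKernel_of_mem (hdisj : Pairwise (Function.onFun Disjoint U)) {x y : ℚ_[p]}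
    {v w : V} (hx : x ∈ U v) (hy : y ∈ U w) :
    graphKernel U α K x y = if v = w then ‖x - y‖ ^ (-α) else K v w := by
  rw [graphKernel, vertexOf_eq hdisj hx, vertexOf_eq hdisj hy]

lemma graphLaplacian_eq_sum [Fintype V] [MeasurableSpace ℚ_[p]] (μ : Measure ℚ_[p])
    (hUm : ∀ w, MeasurableSet (U w)) (hdisj : Pairwise (Function.onFun Disjoint U))
    {u : ℚ_[p] → ℂ} {x : ℚ_[p]}
    (hint : ∀ w, IntegrableOn (fun y => graphKernel U α K x y • (u y - u x)) (U w) μ) :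
    graphLaplacian μ U α K u x = ∑ w, ∫ y in U w, graphKernel U α K x y • (u y - u x) ∂μ := by
  rw [graphLaplacian, integral_iUnion hUm hdisj (integrableOn_finite_iUnion.2 hint),
    tsum_fintype]

lemma eqOn_graphKernel_smul_of_mem (hdisj : Pairwise (Function.onFun Disjoint U))
    {u : ℚ_[p] → ℂ} {x : ℚ_[p]} {v : V} (hx : x ∈ U v) :
    Set.EqOn (fun y => graphKernel U α K x y • (u y - u x))
      (fun y => ‖x - y‖ ^ (-α) • (u y - u x)) (U v) := by
  intro y hy
  simp only [graphKernel_of_mem hdisj hx hy, if_true]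

lemma eqOn_graphKernel_smul_of_ne (hdisj : Pairwise (Function.onFun Disjoint U))
    {u : ℚ_[p] → ℂ} {x : ℚ_[p]} {v w : V} (hx : x ∈ U v) (hvw : v ≠ w)
    (hu : ∀ y ∈ U w, u y = 0) :
    Set.EqOn (fun y => graphKernel U α K x y • (u y - u x)) (fun _ => K v w • -u x) (U w) := by
  intro y hy
  simp only [graphKernel_of_mem hdisj hx hy, if_neg hvw, hu y hy, zero_sub]

variable {b : ℚ_[p]} {d : ℤ} {ζ : ℂ} {j : ℕ} {v : V}

lemma eqOn_graphKernel_smul_diff_closedBall (hdisj : Pairwise (Function.onFun Disjoint U))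
    {u : ℚ_[p] → ℂ} {x : ℚ_[p]} {r : ℝ} (hB : closedBall b r ⊆ U v) (hx : x ∈ closedBall b r)
    (hu : ∀ y ∉ closedBall b r, u y = 0) :
    Set.EqOn (fun y => graphKernel U α K x y • (u y - u x)) (fun y => ‖y - b‖ ^ (-α) • -u x)
      (U v \ closedBall b r) := by
  intro y hy
  simp only [graphKernel_of_mem hdisj (hB hx) hy.1, if_true, hu y hy.2, zero_sub]
  rw [← dist_eq_norm, dist_comm, IsUltrametricDist.dist_eq_of_mem_closedBall_of_notMem hx hy.2,
    dist_eq_norm]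

lemma graphKernel_eq_graphKernel_center (hdisj : Pairwise (Function.onFun Disjoint U)) {r : ℝ}
    (hr : 0 ≤ r) (hB : closedBall b r ⊆ U v) {x y : ℚ_[p]} (hx : x ∉ closedBall b r)
    (hy : y ∈ closedBall b r) : graphKernel U α K x y = graphKernel U α K x b := by
  rw [graphKernel, graphKernel, vertexOf_eq hdisj (hB hy),
    vertexOf_eq hdisj (hB (mem_closedBall_self hr)), ← dist_eq_norm, ← dist_eq_norm,
    IsUltrametricDist.dist_eq_of_mem_closedBall_of_notMem hy hx]

lemma integrableOn_graphKernel_smul_kozyrevWavelet [MeasurableSpace ℚ_[p]] [BorelSpace ℚ_[p]]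
    (μ : Measure ℚ_[p]) [μ.IsAddHaarMeasure] (hU : ∀ w, IsCompact (U w))
    (hdisj : Pairwise (Function.onFun Disjoint U)) (hB : closedBall b ((p : ℝ) ^ (-d)) ⊆ U v)
    {x : ℚ_[p]} (hx : x ∈ closedBall b ((p : ℝ) ^ (-d))) (w : V) :
    IntegrableOn (fun y => graphKernel U α K x y •
      (kozyrevWavelet p b d ζ j y - kozyrevWavelet p b d ζ j x)) (U w) μ := by
  by_cases hvw : v = w
  · subst hvw
    rw [← Set.union_sdiff_cancel hB]
    refine IntegrableOn.union ?_ ?_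
    · exact (integrableOn_closedBall_norm_sub_rpow_smul μ hx α).congr_fun
        ((eqOn_graphKernel_smul_of_mem hdisj (hB hx)).mono hB).symm measurableSet_closedBall
    · exact IntegrableOn.congr_fun ((IsUltrametricDist.integrableOn_norm_sub_rpow_diff_closedBall
        μ (hU v) (b := b) (zpow_natCast_pos (p := p) (-d)) α).smul_const _)
        (eqOn_graphKernel_smul_diff_closedBall hdisj hB hx fun y => kozyrevWavelet_of_notMem).symm
        ((hU v).isClosed.measurableSet.diff measurableSet_closedBall)
  · exact (integrableOn_const (hU w).measure_lt_top.ne).congr_fun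
      (eqOn_graphKernel_smul_of_ne hdisj (hB hx) hvw
        fun y => kozyrevWavelet_eq_zero_of_mem_of_ne hdisj hB hvw).symm
      (hU w).isClosed.measurableSet

theorem graphLaplacian_kozyrevWavelet_of_mem [Fintype V] [MeasurableSpace ℚ_[p]]
    [BorelSpace ℚ_[p]] (μ : Measure ℚ_[p]) [μ.IsAddHaarMeasure] (hμ : μ (closedBall 0 1) = 1)
    (hU : ∀ w, IsCompact (U w)) (hdisj : Pairwise (Function.onFun Disjoint U))
    (hB : closedBall b ((p : ℝ) ^ (-d)) ⊆ U v) (hζ : ζ ^ p = 1) (hζj : ζ ^ j ≠ 1) {x : ℚ_[p]}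
    (hx : x ∈ closedBall b ((p : ℝ) ^ (-d))) :
    graphLaplacian μ U α K (kozyrevWavelet p b d ζ j) x =
      (-(p : ℝ) ^ ((d : ℝ) * (α - 1))
        - (∫ y in U v \ closedBall b ((p : ℝ) ^ (-d)), ‖y - b‖ ^ (-α) ∂μ)
        - ∑ w ∈ Finset.univ.erase v, K v w * μ.real (U w)) • kozyrevWavelet p b d ζ j x := by
  have hUm (w : V) : MeasurableSet (U w) := (hU w).isClosed.measurableSet
  have hint := integrableOn_graphKernel_smul_kozyrevWavelet (α := α) (K := K) (ζ := ζ) (j := j)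
    μ hU hdisj hB hx
  have hoff (w : V) (hvw : v ≠ w) :=
    eqOn_graphKernel_smul_of_ne (α := α) (K := K) hdisj (hB hx) hvw
      fun y => kozyrevWavelet_eq_zero_of_mem_of_ne (ζ := ζ) (j := j) hdisj hB hvw
  rw [graphLaplacian_eq_sum μ hUm hdisj hint, ← Finset.add_sum_erase _ _ (Finset.mem_univ v),
    ← integral_inter_add_sdiff measurableSet_closedBall (hint v),
    Set.inter_eq_self_of_subset_right hB,
    setIntegral_congr_fun measurableSet_closedBall
      ((eqOn_graphKernel_smul_of_mem hdisj (hB hx)).mono hB),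
    setIntegral_closedBall_norm_sub_rpow_smul μ hμ hζ hζj hx,
    setIntegral_congr_fun ((hUm v).diff measurableSet_closedBall)
      (eqOn_graphKernel_smul_diff_closedBall hdisj hB hx fun y => kozyrevWavelet_of_notMem),
    integral_smul_const, Finset.sum_congr rfl fun w hw =>
      setIntegral_congr_fun (hUm w) (hoff w (Finset.ne_of_mem_erase hw).symm)]
  simp only [setIntegral_const, smul_smul, mul_comm (μ.real _), ← Finset.sum_smul]
  module

theorem graphLaplacian_kozyrevWavelet_of_notMem [MeasurableSpace ℚ_[p]] [MeasurableAdd ℚ_[p]]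
    (μ : Measure ℚ_[p]) [μ.IsAddRightInvariant] (hdisj : Pairwise (Function.onFun Disjoint U))
    (hB : closedBall b ((p : ℝ) ^ (-d)) ⊆ U v) (hζ : ζ ^ p = 1) (hζj : ζ ^ j ≠ 1) {x : ℚ_[p]}
    (hx : x ∉ closedBall b ((p : ℝ) ^ (-d))) :
    graphLaplacian μ U α K (kozyrevWavelet p b d ζ j) x = 0 := by
  have hF (y : ℚ_[p]) : graphKernel U α K x y •
      (kozyrevWavelet p b d ζ j y - kozyrevWavelet p b d ζ j x) =
        graphKernel U α K x b • kozyrevWavelet p b d ζ j y := by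
    rw [kozyrevWavelet_of_notMem hx, sub_zero]
    by_cases hy : y ∈ closedBall b ((p : ℝ) ^ (-d))
    · rw [graphKernel_eq_graphKernel_center hdisj (zpow_natCast_pos _).le hB hx hy]
    · rw [kozyrevWavelet_of_notMem hy, smul_zero, smul_zero]
  simp_rw [graphLaplacian, hF]
  rw [integral_smul, setIntegral_eq_integral_of_forall_compl_eq_zero fun y hy =>
      kozyrevWavelet_of_notMem fun hyB => hy (Set.mem_iUnion.2 ⟨v, hB hyB⟩),
    integral_kozyrevWavelet μ hζ hζj, smul_zero]

end GraphLaplacian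

end Padic

theorem kozyrev_eigenfunction_graphLaplacian_general (p : ℕ) [Fact p.Prime]
    [MeasurableSpace ℚ_[p]] [BorelSpace ℚ_[p]]
    (μ : Measure ℚ_[p]) [μ.IsAddHaarMeasure]
    (hμ : μ {x : ℚ_[p] | ‖x‖ ≤ 1} = 1)
    {V : Type*} [Fintype V] [Nonempty V] [DecidableEq V]
    (U : V → Set ℚ_[p]) (bc : V → ℚ_[p]) (rad : V → ℤ)
    (hU : ∀ v, U v = {x : ℚ_[p] | ‖x - bc v‖ ≤ (p : ℝ) ^ (-(rad v))})
    (hdisj : Pairwise (Function.onFun Disjoint U))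
    (α : ℝ) (K : V → V → ℝ)
    (v : V) (b : ℚ_[p]) (d : ℤ)
    (hB : {x : ℚ_[p] | ‖x - b‖ ≤ (p : ℝ) ^ (-d)} ⊆ U v)
    (ζ : ℂ) (hζ : IsPrimitiveRoot ζ p)
    (j : ℕ) (hj1 : 1 ≤ j) (hj2 : j ≤ p - 1) :
    ∀ x ∈ ⋃ w, U w,
      graphLaplacian μ U α K (kozyrevWavelet p b d ζ j) x
        = (-((p : ℝ) ^ ((d : ℝ) * (α - 1)))
            - (∫ y in U v \ {y : ℚ_[p] | ‖y - b‖ ≤ (p : ℝ) ^ (-d)}, ‖y - b‖ ^ (-α) ∂μ)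
            - ∑ w ∈ Finset.univ.erase v, K v w * (μ (U w)).toReal)
          • kozyrevWavelet p b d ζ j x := by
  intro x _
  rw [setOf_norm_sub_le_eq_closedBall] at hB ⊢
  have hμ' : μ (closedBall 0 1) = 1 := by
    simpa only [← setOf_norm_sub_le_eq_closedBall, sub_zero] using hμ
  have hUc (w : V) : IsCompact (U w) := by
    rw [hU w, setOf_norm_sub_le_eq_closedBall]
    exact isCompact_closedBall _ _
  have hζj : ζ ^ j ≠ 1 := fun h => by
    have := Nat.le_of_dvd hj1 ((hζ.pow_eq_one_iff_dvd j).1 h)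
    omega
  by_cases hx : x ∈ closedBall b ((p : ℝ) ^ (-d))
  · exact Padic.graphLaplacian_kozyrevWavelet_of_mem μ hμ' hUc hdisj hB hζ.pow_eq_one hζj hx
  · rw [Padic.graphLaplacian_kozyrevWavelet_of_notMem μ hdisj hB hζ.pow_eq_one hζj hx,
      Padic.kozyrevWavelet_of_notMem hx, smul_zero]

/-- **Kozyrev-wavelet part of the spectral theorem for the p-adic graph Laplacian
`H_•` on `L²(Z, dx)`**: every Kozyrev wavelet supported in a ball `B ⊆ U_v` is an
eigenfunction of `H` with eigenvalue
`λ_B = −p^{d(α−1)} − ∫_{U_v∖B} |y − b|_p^{−α} dμ(y) − ∑_{w ≠ v} K(v,w)·μ(U_w)`. -/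
theorem kozyrev_eigenfunction_graphLaplacian (p : ℕ) [Fact p.Prime]
    [MeasurableSpace ℚ_[p]] [BorelSpace ℚ_[p]]
    (μ : Measure ℚ_[p]) [μ.IsAddHaarMeasure]
    (hμ : μ {x : ℚ_[p] | ‖x‖ ≤ 1} = 1)
    {V : Type*} [Fintype V] [Nonempty V] [DecidableEq V]
    (U : V → Set ℚ_[p]) (bc : V → ℚ_[p]) (rad : V → ℤ)
    (hU : ∀ v, U v = {x : ℚ_[p] | ‖x - bc v‖ ≤ (p : ℝ) ^ (-(rad v))})
    (hdisj : Pairwise (Function.onFun Disjoint U))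
    (α : ℝ) (K : V → V → ℝ)
    (hK_nonneg : ∀ v w, 0 ≤ K v w) (hK_symm : ∀ v w, K v w = K w v)
    (hK_diag : ∀ v, K v v = 0)
    (v : V) (b : ℚ_[p]) (d : ℤ) (hd : rad v ≤ d)
    (hB : {x : ℚ_[p] | ‖x - b‖ ≤ (p : ℝ) ^ (-d)} ⊆ U v)
    (ζ : ℂ) (hζ : IsPrimitiveRoot ζ p)
    (j : ℕ) (hj1 : 1 ≤ j) (hj2 : j ≤ p - 1) :
    ∀ x ∈ ⋃ w, U w,
      graphLaplacian μ U α K (kozyrevWavelet p b d ζ j) x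
        = (-((p : ℝ) ^ ((d : ℝ) * (α - 1)))
            - (∫ y in U v \ {y : ℚ_[p] | ‖y - b‖ ≤ (p : ℝ) ^ (-d)}, ‖y - b‖ ^ (-α) ∂μ)
            - ∑ w ∈ Finset.univ.erase v, K v w * (μ (U w)).toReal)
          • kozyrevWavelet p b d ζ j x :=
  kozyrev_eigenfunction_graphLaplacian_general p μ hμ U bc rad hU hdisj α K v b d hB ζ hζ j hj1 hj2
end

section
/- Comparison of the graph-metric and ultrametric p-adic Laplacians: for every bounded measurable u : Z → ℝ, sup_{x∈Z} |H_1 u(x) − H_2 u(x)| ≤ 2‖u‖_∞ · ∑_{(v,w) ∈ V×V, v ≠ w} C̃_{v,w}·μ(U_w), where C̃_{v,w} = α·|d_E(v,w) − δ(v,w)| / δ(v,w)^{α+1}. (Generator estimate underlying the semigroup comparison theorem for the operators H_{d_E} and H_δ.) -/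
open MeasureTheory

/-- The kernel attached to a metric `ρ` on the vertex set:
`k(x,y) = |x − y|_p^{−α}` if `v(x) = v(y)`, and `k(x,y) = ρ(v(x),v(y))^{−α}`
otherwise. -/
noncomputable def metricKernel {p : ℕ} [Fact p.Prime] {V : Type*} [Nonempty V]
    [DecidableEq V] (U : V → Set ℚ_[p]) (ρ : V → V → ℝ) (α : ℝ)
    (x y : ℚ_[p]) : ℝ :=
  if vertexOf U x = vertexOf U y then ‖x - y‖ ^ (-α)
  else ρ (vertexOf U x) (vertexOf U y) ^ (-α)

/-- The p-adic Laplacian attached to a metric `ρ` on the vertex set,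
`H u (x) = ∫_Z k(x,y)(u(y) − u(x)) dμ(y)` on `Z = ⋃_v U_v`, the integrand being
taken to be `0` whenever `u(y) = u(x)`. -/
noncomputable def metricLaplacian {p : ℕ} [Fact p.Prime] {V : Type*} [Nonempty V]
    [DecidableEq V] [MeasurableSpace ℚ_[p]] (μ : Measure ℚ_[p])
    (U : V → Set ℚ_[p]) (ρ : V → V → ℝ) (α : ℝ) (u : ℚ_[p] → ℝ) (x : ℚ_[p]) : ℝ :=
  haveI := fun y => Classical.propDecidable (u y = u x)
  ∫ y in ⋃ v, U v,
    (if u y = u x then 0 else metricKernel U ρ α x y * (u y - u x)) ∂μ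

/-!
Fix `x ∈ U v`. The two kernels agree on `U v`, and on another ball `U w` they differ by the
constant `d_E(v,w)^{-α} − δ(v,w)^{-α}`, so the difference of the integrands is bounded on each
ball `U w` by `2‖u‖_∞ |d_E(v,w)^{-α} − δ(v,w)^{-α}|`; the mean value theorem for `t ↦ t^{-α}` on
`[δ(v,w), d_E(v,w)]` bounds the latter factor by `C̃_{v,w}`. The singular diagonal part of the
kernel cancels, so the difference of the integrands is integrable; hence either both integrals
defining `H₁u(x)` and `H₂u(x)` exist, or neither does and both take the junk value `0`.
-/

open Finset Function

lemma abs_rpow_neg_sub_rpow_neg_le {a b α : ℝ} (ha : 0 < a) (hab : a ≤ b) (hα : 0 ≤ α) :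
    |b ^ (-α) - a ^ (-α)| ≤ α * |b - a| / a ^ (α + 1) := by
  have hderiv : ∀ t ∈ Set.Ici a,
      HasDerivWithinAt (fun t : ℝ => t ^ (-α)) (-α * t ^ (-α - 1)) (Set.Ici a) t :=
    fun t ht => (Real.hasDerivAt_rpow_const (Or.inl (ha.trans_le ht).ne')).hasDerivWithinAt
  have hbound : ∀ t ∈ Set.Ici a, ‖-α * t ^ (-α - 1)‖ ≤ α * a ^ (-α - 1) := by
    intro t ht
    have ht0 : 0 < t := ha.trans_le ht
    rw [Real.norm_eq_abs, abs_mul, abs_neg, abs_of_nonneg hα,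
      abs_of_pos (Real.rpow_pos_of_pos ht0 _)]
    exact mul_le_mul_of_nonneg_left (Real.rpow_le_rpow_of_nonpos ha ht (by linarith)) hα
  have h := (convex_Ici a).norm_image_sub_le_of_norm_hasDerivWithin_le hderiv hbound
    Set.self_mem_Ici hab
  rw [Real.norm_eq_abs, Real.norm_eq_abs] at h
  calc |b ^ (-α) - a ^ (-α)| ≤ α * a ^ (-α - 1) * |b - a| := h
    _ = α * |b - a| / a ^ (α + 1) := by
      rw [show -α - 1 = -(α + 1) by ring, Real.rpow_neg ha.le]
      ring

section SetIntegral

variable {X : Type*} [MeasurableSpace X] {μ : Measure X}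

lemma abs_setIntegral_sub_setIntegral_le {f g : X → ℝ} {s : Set X} {B : ℝ} (hB : 0 ≤ B)
    (hfg : IntegrableOn (f - g) s μ) (h : |∫ x in s, (f - g) x ∂μ| ≤ B) :
    |∫ x in s, f x ∂μ - ∫ x in s, g x ∂μ| ≤ B := by
  by_cases hg : IntegrableOn g s μ
  · have hf : IntegrableOn f s μ := by simpa using hfg.add hg
    rwa [← integral_sub hf hg]
  · have hf : ¬ IntegrableOn f s μ := fun hf => hg (by simpa using hf.sub hfg)
    rwa [integral_undef hf, integral_undef hg, sub_zero, abs_zero]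

lemma abs_setIntegral_iUnion_le_sum {ι : Type*} [Fintype ι] {s : ι → Set X}
    (hs : ∀ i, MeasurableSet (s i)) (hd : Pairwise (Disjoint on s)) (hfin : ∀ i, μ (s i) < ⊤)
    {f : X → ℝ} (hf : ∀ i, IntegrableOn f (s i) μ) {C : ι → ℝ} (hC : ∀ i, ∀ x ∈ s i, |f x| ≤ C i) :
    |∫ x in ⋃ i, s i, f x ∂μ| ≤ ∑ i, C i * μ.real (s i) := by
  rw [integral_iUnion_fintype hs hd hf]
  exact (abs_sum_le_sum_abs _ _).trans <| sum_le_sum fun i _ =>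
    norm_setIntegral_le_of_norm_le_const (f := f) (C := C i) (hfin i) (hC i)

end SetIntegral

lemma sum_erase_le_sum_filter_ne {V M : Type*} [Fintype V] [DecidableEq V] [AddCommMonoid M]
    [PartialOrder M] [IsOrderedAddMonoid M] {F : V × V → M} (hF : ∀ q : V × V, q.1 ≠ q.2 → 0 ≤ F q)
    (v : V) :
    ∑ w ∈ univ.erase v, F (v, w) ≤ ∑ q ∈ univ.filter (fun q : V × V => q.1 ≠ q.2), F q := by
  rw [← sum_image (fun _ _ _ _ h => (Prod.ext_iff.mp h).2)]
  refine sum_le_sum_of_subset_of_nonneg ?_ fun q hq _ => hF q (mem_filter.mp hq).2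
  intro q hq
  obtain ⟨w, hw, rfl⟩ := mem_image.mp hq
  simpa [eq_comm] using hw

section MetricLaplacian

variable {p : ℕ} [Fact p.Prime] {V : Type*} [Nonempty V] {U : V → Set ℚ_[p]}

lemma vertexOf_eq_of_mem (hdisj : Pairwise (Disjoint on U)) {x : ℚ_[p]} {v : V} (hx : x ∈ U v) :
    vertexOf U x = v := by
  have hex : ∃ w, x ∈ U w := ⟨v, hx⟩
  rw [vertexOf, dif_pos hex]
  by_contra hne
  exact Set.disjoint_left.mp (hdisj hne) hex.choose_spec hx

variable [DecidableEq V]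

lemma metricKernel_sub_metricKernel (hdisj : Pairwise (Disjoint on U)) (ρ₁ ρ₂ : V → V → ℝ)
    (α : ℝ) {x y : ℚ_[p]} {v w : V} (hx : x ∈ U v) (hy : y ∈ U w) :
    metricKernel U ρ₁ α x y - metricKernel U ρ₂ α x y
      = if v = w then 0 else ρ₁ v w ^ (-α) - ρ₂ v w ^ (-α) := by
  simp only [metricKernel, vertexOf_eq_of_mem hdisj hx, vertexOf_eq_of_mem hdisj hy]
  split_ifs <;> simp

lemma metricLaplacian_eq_setIntegral [MeasurableSpace ℚ_[p]] (μ : Measure ℚ_[p])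
    (U : V → Set ℚ_[p]) (ρ : V → V → ℝ) (α : ℝ) (u : ℚ_[p] → ℝ) (x : ℚ_[p]) :
    metricLaplacian μ U ρ α u x = ∫ y in ⋃ v, U v, metricKernel U ρ α x y * (u y - u x) ∂μ := by
  refine integral_congr_ae (ae_of_all _ fun y => ?_)
  dsimp only
  split_ifs with h <;> simp [h]

variable [Fintype V]

theorem abs_metricLaplacian_sub_le [MeasurableSpace ℚ_[p]] {μ : Measure ℚ_[p]}
    (hUm : ∀ v, MeasurableSet (U v)) (hUfin : ∀ v, μ (U v) < ⊤)
    (hdisj : Pairwise (Disjoint on U)) (ρ₁ ρ₂ : V → V → ℝ) (α : ℝ) {u : ℚ_[p] → ℝ}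
    (hu : Measurable u) {M : ℝ} (hM : ∀ y, |u y| ≤ M) {x : ℚ_[p]} {v : V} (hx : x ∈ U v) :
    |metricLaplacian μ U ρ₁ α u x - metricLaplacian μ U ρ₂ α u x|
      ≤ 2 * M * ∑ w ∈ univ.erase v, |ρ₁ v w ^ (-α) - ρ₂ v w ^ (-α)| * μ.real (U w) := by
  set c : V → ℝ := fun w => if v = w then 0 else ρ₁ v w ^ (-α) - ρ₂ v w ^ (-α)
  set f : ℚ_[p] → ℝ := fun y => metricKernel U ρ₁ α x y * (u y - u x)
  set g : ℚ_[p] → ℝ := fun y => metricKernel U ρ₂ α x y * (u y - u x)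
  have hM0 : 0 ≤ M := (abs_nonneg _).trans (hM x)
  have hu_diff : ∀ y, |u y - u x| ≤ 2 * M := fun y => by
    linarith [abs_sub (u y) (u x), hM y, hM x]
  have hfg : ∀ w, Set.EqOn (f - g) (fun y => c w * (u y - u x)) (U w) := fun w y hy => by
    simp only [Pi.sub_apply, f, g, c, ← sub_mul, metricKernel_sub_metricKernel hdisj ρ₁ ρ₂ α hx hy]
  have hcu : ∀ w y, |c w * (u y - u x)| ≤ |c w| * (2 * M) := fun w y => by
    rw [abs_mul]
    exact mul_le_mul_of_nonneg_left (hu_diff y) (abs_nonneg _)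
  have hbound : ∀ w, ∀ y ∈ U w, |(f - g) y| ≤ |c w| * (2 * M) := fun w y hy => by
    rw [hfg w hy]
    exact hcu w y
  have hint : ∀ w, IntegrableOn (f - g) (U w) μ := fun w =>
    (Measure.integrableOn_of_bounded (hUfin w).ne
      (measurable_const.mul (hu.sub measurable_const)).aestronglyMeasurable
      (ae_of_all _ (hcu w))).congr_fun (hfg w).symm (hUm w)
  rw [metricLaplacian_eq_setIntegral, metricLaplacian_eq_setIntegral]
  refine abs_setIntegral_sub_setIntegral_le (by positivity) (integrableOn_finite_iUnion.2 hint) ?_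
  calc |∫ y in ⋃ w, U w, (f - g) y ∂μ| ≤ ∑ w, |c w| * (2 * M) * μ.real (U w) :=
        abs_setIntegral_iUnion_le_sum hUm hdisj hUfin hint hbound
    _ = 2 * M * ∑ w ∈ univ.erase v, |ρ₁ v w ^ (-α) - ρ₂ v w ^ (-α)| * μ.real (U w) := by
      rw [← sum_erase univ (a := v) (by simp [c]), mul_sum]
      refine sum_congr rfl fun w hw => ?_
      simp only [c, if_neg (ne_of_mem_erase hw).symm]
      ring

end MetricLaplacian

theorem metric_laplacian_comparison_general (p : ℕ) [Fact p.Prime]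
    [MeasurableSpace ℚ_[p]] [BorelSpace ℚ_[p]]
    (μ : Measure ℚ_[p]) [μ.IsAddHaarMeasure]
    {V : Type*} [Fintype V] [Nonempty V] [DecidableEq V]
    (U : V → Set ℚ_[p]) (bc : V → ℚ_[p]) (rad : V → ℤ)
    (hU : ∀ v, U v = {x : ℚ_[p] | ‖x - bc v‖ ≤ (p : ℝ) ^ (-(rad v))})
    (hdisj : Pairwise (Function.onFun Disjoint U))
    (α : ℝ) (hα : 1 ≤ α)
    (dE δ : V → V → ℝ)
    (hδ_pos : ∀ v w, v ≠ w → 0 < δ v w)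
    (hle : ∀ v w, δ v w ≤ dE v w)
    (u : ℚ_[p] → ℝ) (hu_meas : Measurable u)
    (hu_bdd : BddAbove (Set.range fun y => |u y|)) :
    ∀ x ∈ ⋃ v, U v,
      |metricLaplacian μ U dE α u x - metricLaplacian μ U δ α u x|
        ≤ 2 * (⨆ y, |u y|) *
          ∑ q ∈ Finset.univ.filter (fun q : V × V => q.1 ≠ q.2),
            (α * |dE q.1 q.2 - δ q.1 q.2| / δ q.1 q.2 ^ (α + 1))
              * (μ (U q.2)).toReal := by
  intro x hx
  obtain ⟨v, hv⟩ := Set.mem_iUnion.mp hx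
  have hball : ∀ w, U w = Metric.closedBall (bc w) ((p : ℝ) ^ (-(rad w))) := fun w => by
    rw [hU w]
    rfl
  have hM : ∀ y, |u y| ≤ ⨆ y, |u y| := le_ciSup hu_bdd
  have hM0 : 0 ≤ 2 * ⨆ y, |u y| := by linarith [abs_nonneg (u x), hM x]
  have hF : ∀ q : V × V, q.1 ≠ q.2 →
      0 ≤ α * |dE q.1 q.2 - δ q.1 q.2| / δ q.1 q.2 ^ (α + 1) * (μ (U q.2)).toReal := fun q hq => by
    have := hδ_pos q.1 q.2 hq
    positivity
  calc _ ≤ 2 * (⨆ y, |u y|) * ∑ w ∈ univ.erase v, |dE v w ^ (-α) - δ v w ^ (-α)| * μ.real (U w) :=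
        abs_metricLaplacian_sub_le (fun w => hball w ▸ measurableSet_closedBall)
          (fun w => hball w ▸ (isCompact_closedBall _ _).measure_lt_top) hdisj dE δ α hu_meas hM hv
    _ ≤ 2 * (⨆ y, |u y|) * ∑ w ∈ univ.erase v,
          α * |dE v w - δ v w| / δ v w ^ (α + 1) * (μ (U w)).toReal := by
        refine mul_le_mul_of_nonneg_left (sum_le_sum fun w hw => ?_) hM0
        exact mul_le_mul_of_nonneg_right (abs_rpow_neg_sub_rpow_neg_le
          (hδ_pos v w (ne_of_mem_erase hw).symm) (hle v w) (by linarith)) measureReal_nonneg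
    _ ≤ _ := mul_le_mul_of_nonneg_left (sum_erase_le_sum_filter_ne hF v) hM0

/-- **Comparison of the graph-metric and ultrametric p-adic Laplacians**
(generator estimate underlying the semigroup comparison theorem for `H_{d_E}` and
`H_δ`): for bounded measurable `u`,
`sup_{x∈Z} |H₁u(x) − H₂u(x)| ≤ 2‖u‖_∞·∑_{v≠w} C̃_{v,w}·μ(U_w)`, where
`C̃_{v,w} = α·|d_E(v,w) − δ(v,w)|/δ(v,w)^{α+1}`. -/
theorem metric_laplacian_comparison (p : ℕ) [Fact p.Prime]
    [MeasurableSpace ℚ_[p]] [BorelSpace ℚ_[p]]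
    (μ : Measure ℚ_[p]) [μ.IsAddHaarMeasure]
    (hμ : μ {x : ℚ_[p] | ‖x‖ ≤ 1} = 1)
    {V : Type*} [Fintype V] [Nonempty V] [DecidableEq V]
    (U : V → Set ℚ_[p]) (bc : V → ℚ_[p]) (rad : V → ℤ)
    (hU : ∀ v, U v = {x : ℚ_[p] | ‖x - bc v‖ ≤ (p : ℝ) ^ (-(rad v))})
    (hdisj : Pairwise (Function.onFun Disjoint U))
    (α : ℝ) (hα : 1 ≤ α)
    (dE δ : V → V → ℝ)
    (hdE_self : ∀ v, dE v v = 0) (hdE_symm : ∀ v w, dE v w = dE w v)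
    (hdE_pos : ∀ v w, v ≠ w → 0 < dE v w)
    (hdE_triangle : ∀ u v w, dE u w ≤ dE u v + dE v w)
    (hδ_self : ∀ v, δ v v = 0) (hδ_symm : ∀ v w, δ v w = δ w v)
    (hδ_pos : ∀ v w, v ≠ w → 0 < δ v w)
    (hδ_triangle : ∀ u v w, δ u w ≤ δ u v + δ v w)
    (hle : ∀ v w, δ v w ≤ dE v w)
    (u : ℚ_[p] → ℝ) (hu_meas : Measurable u)
    (hu_bdd : BddAbove (Set.range fun y => |u y|)) :
    ∀ x ∈ ⋃ v, U v,
      |metricLaplacian μ U dE α u x - metricLaplacian μ U δ α u x|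
        ≤ 2 * (⨆ y, |u y|) *
          ∑ q ∈ Finset.univ.filter (fun q : V × V => q.1 ≠ q.2),
            (α * |dE q.1 q.2 - δ q.1 q.2| / δ q.1 q.2 ^ (α + 1))
              * (μ (U q.2)).toReal :=
  metric_laplacian_comparison_general p μ U bc rad hU hdisj α hα dE δ hδ_pos hle u hu_meas hu_bdd
end
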